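/- arXiv:hep-th/0003114 — 3 statements merged into one kernel-verified Lean document; each statement's English description precedes it below -/
import Mathlib

section
/- Suppose r = (r_i) is a W-valued 1-form each of whose components contains only terms of total degree ≥ 3 (with deg y^i = 1, deg ħ = 2), and suppose D is flat, i.e. D(Da) = 0 for every a ∈ W. Then for every formal power series a_0 = a_0(x,ħ) in ħ with smooth complex-valued coefficient functions on U (no y-dependence) there exists a unique a ∈ W such that Da = 0 and a|_{y=0} = a_0. (This is the local-coordinate form of the statement that every classical observable on the symplectic manifold admits a unique BRST-invariant quantum extension, i.e. a unique Fedosov flat section of the Weyl bundle with prescribed value at y = 0.) -/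
/-!
Context: a symmetric symplectic connection `Γ` for `ω` on an open `U ⊆ ℝ^N`;
`W` is the algebra of formal power series in `y^1,…,y^N` and `ħ` with smooth
coefficients on `U`, with the fibrewise Weyl–Moyal product `⋆`; `D` is the
Fedosov-type connection built from a `W`-valued 1-form `r = (r_i)`.

STATEMENT 1 (unique flat sections): if each `r_i` contains only terms of total
degree `≥ 3` and `D` is flat (`D(Da) = 0` for every `a ∈ W`), then for every
formal power series `a_0(x,ħ)` with smooth coefficients (no `y`-dependence)
there is a unique `a ∈ W` with `Da = 0` and `a|_{y=0} = a_0`.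
-/

open scoped BigOperators


/-- The Weyl algebra `W`: formal power series in `y^1,…,y^N` and `ħ` whose
coefficients are (complex-valued) functions on `ℝ^N`; `a α k` is the
coefficient function of `y^α ħ^k`. -/
abbrev Wc (N : ℕ) := (Fin N →₀ ℕ) → ℕ → (Fin N → ℝ) → ℂ

/-- Membership in `W` over `U`: all coefficients are smooth on `U`. -/
def SmoothW {N : ℕ} (U : Set (Fin N → ℝ)) (a : Wc N) : Prop :=
  ∀ α k, ContDiffOn ℝ (⊤ : ℕ∞) (a α k) U

/-- `a` contains only terms of total degree `≥ 3` (on `U`),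
for `deg y^i = 1`, `deg ħ = 2`. -/
def DegGe3 {N : ℕ} (U : Set (Fin N → ℝ)) (a : Wc N) : Prop :=
  ∀ (α : Fin N →₀ ℕ) (k : ℕ), (α.sum fun _ n => n) + 2 * k < 3 →
    ∀ x ∈ U, a α k x = 0

/-- The derivative `∂a/∂y^i` of a formal series. -/
noncomputable def dyW {N : ℕ} (i : Fin N) (a : Wc N) : Wc N :=
  fun α k x => ((α i : ℂ) + 1) * a (α + Finsupp.single i 1) k x

/-- The derivative `∂a/∂x^i` of a formal series (coefficientwise). -/
noncomputable def dxW {N : ℕ} (i : Fin N) (a : Wc N) : Wc N :=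
  fun α k x => fderiv ℝ (a α k) x (Pi.single i 1)

/-- Multiplication by `y^l`. -/
noncomputable def ymulW {N : ℕ} (l : Fin N) (a : Wc N) : Wc N :=
  fun α k x => if α l = 0 then 0 else a (α - Finsupp.single l 1) k x

/-- The (commutative) product of formal series. -/
noncomputable def mulW {N : ℕ} (a b : Wc N) : Wc N :=
  fun α k x =>
    ∑ q ∈ Finset.HasAntidiagonal.antidiagonal α, ∑ lm ∈ Finset.HasAntidiagonal.antidiagonal k,
      a q.1 lm.1 x * b q.2 lm.2 x

/-- Iterated `∂/∂y` along a tuple of directions. -/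
noncomputable def itdyW {N : ℕ} : {j : ℕ} → (Fin j → Fin N) → Wc N → Wc N
  | 0, _, a => a
  | _ + 1, v, a => dyW (v 0) (itdyW (fun t => v t.succ) a)

/-- The fibrewise Weyl–Moyal product
`a ⋆ b = Σ_k (1/k!) (−iħ/2)^k ω^{i₁j₁}⋯ (∂^k a/∂y^{i…}) (∂^k b/∂y^{j…})`. -/
noncomputable def starW {N : ℕ} (ω' : Fin N → Fin N → (Fin N → ℝ) → ℝ)
    (a b : Wc N) : Wc N :=
  fun α k x =>
    ∑ j ∈ Finset.range (k + 1),
      ((-Complex.I / 2) ^ j / (j.factorial : ℂ)) *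
      ∑ v : Fin j → Fin N, ∑ w : Fin j → Fin N,
        ((∏ t, ω' (v t) (w t) x : ℝ) : ℂ) *
          mulW (itdyW v a) (itdyW w b) α (k - j) x

/-- The covariant derivative `∇_i a = ∂a/∂x^i − Γ^m_{il} y^l ∂a/∂y^m` on
`W`-valued 0-forms. -/
noncomputable def nabW {N : ℕ} (Γ : Fin N → Fin N → Fin N → (Fin N → ℝ) → ℝ)
    (i : Fin N) (a : Wc N) : Wc N :=
  fun α k x => dxW i a α k x
    - ∑ m, ∑ l, (Γ m i l x : ℂ) * ymulW l (dyW m a) α k x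

/-- `(i/ħ) c` for a series `c` divisible by `ħ` (drops the `ħ^0` term). -/
noncomputable def ihInvW {N : ℕ} (c : Wc N) : Wc N :=
  fun α k x => Complex.I * c α (k + 1) x

/-- The star commutator `a ⋆ b − b ⋆ a`. -/
noncomputable def commW {N : ℕ} (ω' : Fin N → Fin N → (Fin N → ℝ) → ℝ)
    (a b : Wc N) : Wc N :=
  fun α k x => starW ω' a b α k x - starW ω' b a α k x

/-- The connection `D` on `W`-valued 0-forms:
`(Da)_i = ∇_i a − ∂a/∂y^i + (i/ħ)(r_i ⋆ a − a ⋆ r_i)`. -/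
noncomputable def D0 {N : ℕ} (ω' : Fin N → Fin N → (Fin N → ℝ) → ℝ)
    (Γ : Fin N → Fin N → Fin N → (Fin N → ℝ) → ℝ)
    (r : Fin N → Wc N) (a : Wc N) : Fin N → Wc N :=
  fun i α k x => nabW Γ i a α k x - dyW i a α k x
    + ihInvW (commW ω' (r i) a) α k x

/-- The connection `D` on `W`-valued 1-forms:
`(Db)_{ij} = ∇_i b_j − ∇_j b_i − (∂b_j/∂y^i − ∂b_i/∂y^j)
 + (i/ħ)(r_i ⋆ b_j − r_j ⋆ b_i + b_i ⋆ r_j − b_j ⋆ r_i)`,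
where on 1-forms `∇_i b_j = ∂b_j/∂x^i − Γ^m_{il} y^l ∂b_j/∂y^m − Γ^m_{ij} b_m`. -/
noncomputable def D1 {N : ℕ} (ω' : Fin N → Fin N → (Fin N → ℝ) → ℝ)
    (Γ : Fin N → Fin N → Fin N → (Fin N → ℝ) → ℝ)
    (r : Fin N → Wc N) (b : Fin N → Wc N) : Fin N → Fin N → Wc N :=
  fun i j α k x =>
    (nabW Γ i (b j) α k x - ∑ m, (Γ m i j x : ℂ) * b m α k x)
    - (nabW Γ j (b i) α k x - ∑ m, (Γ m j i x : ℂ) * b m α k x)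
    - (dyW i (b j) α k x - dyW j (b i) α k x)
    + ihInvW (fun α' k' x' =>
        starW ω' (r i) (b j) α' k' x' - starW ω' (r j) (b i) α' k' x'
        + starW ω' (b i) (r j) α' k' x' - starW ω' (b j) (r i) α' k' x') α k x
section Aux
variable {N : ℕ}

/-- total degree of a multi-index -/
def totW (α : Fin N →₀ ℕ) : ℕ := α.sum fun _ n => n

lemma totW_add (α β : Fin N →₀ ℕ) : totW (α + β) = totW α + totW β :=
  Finsupp.sum_add_index' (fun _ => rfl) (fun _ _ _ => rfl)

lemma totW_single (i : Fin N) (n : ℕ) : totW (Finsupp.single i n) = n :=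
  Finsupp.sum_single_index rfl

@[simp] lemma totW_zero : totW (0 : Fin N →₀ ℕ) = 0 := rfl

lemma le_totW (α : Fin N →₀ ℕ) (i : Fin N) : α i ≤ totW α := by
  by_cases h : α i = 0
  · simp [h]
  · exact Finset.single_le_sum (f := fun j => α j) (fun _ _ => Nat.zero_le _)
      (Finsupp.mem_support_iff.mpr h)

lemma totW_eq_zero {α : Fin N →₀ ℕ} (h : totW α = 0) : α = 0 := by
  ext i
  simp only [Finsupp.coe_zero, Pi.zero_apply]
  have := le_totW α i; omega

lemma totW_finsum {j : ℕ} (v : Fin j → Fin N) :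
    totW (∑ t, Finsupp.single (v t) 1) = j := by
  induction j with
  | zero => simp
  | succ n ih =>
    rw [Fin.sum_univ_succ, totW_add, totW_single, ih (fun t => v t.succ)]; omega

lemma sub_single_add {α : Fin N →₀ ℕ} {i : Fin N} (h : α i ≠ 0) :
    α - Finsupp.single i 1 + Finsupp.single i 1 = α := by
  ext j
  simp only [Finsupp.add_apply, Finsupp.tsub_apply, Finsupp.single_apply]
  by_cases hj : i = j
  · subst hj; rw [if_pos rfl]; omega
  · simp [hj]

lemma totW_sub_single {α : Fin N →₀ ℕ} {i : Fin N} (h : α i ≠ 0) :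
    totW (α - Finsupp.single i 1) + 1 = totW α := by
  conv_rhs => rw [← sub_single_add h]
  rw [totW_add, totW_single]

lemma sub_single_apply_self (α : Fin N →₀ ℕ) (i : Fin N) :
    ((α - Finsupp.single i 1 : Fin N →₀ ℕ)) i = α i - 1 := by
  rw [Finsupp.tsub_apply, Finsupp.single_eq_same]

/-- iterated y-derivative reads one coefficient, up to a constant -/
lemma itdyW_apply : ∀ {j : ℕ} (v : Fin j → Fin N),
    ∃ C : (Fin N →₀ ℕ) → ℂ, ∀ (b : Wc N) (α : Fin N →₀ ℕ) (k : ℕ) (x : Fin N → ℝ),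
      itdyW v b α k x = C α * b (α + ∑ t, Finsupp.single (v t) 1) k x := by
  intro j
  induction j with
  | zero => exact fun v => ⟨fun _ => 1, by simp [itdyW]⟩
  | succ n ih =>
    intro v
    obtain ⟨C, hC⟩ := ih (fun t => v t.succ)
    refine ⟨fun α => ((α (v 0) : ℂ) + 1) * C (α + Finsupp.single (v 0) 1), ?_⟩
    intro b α k x
    show dyW (v 0) (itdyW (fun t => v t.succ) b) α k x = _
    rw [dyW]
    simp only []
    rw [hC]
    rw [Fin.sum_univ_succ (f := fun t => Finsupp.single (v t) 1)]
    rw [← add_assoc, mul_assoc]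

end Aux
section Aux2
variable {N : ℕ} (ω' : Fin N → Fin N → (Fin N → ℝ) → ℝ)

lemma starW_congr {p p' c c' : Wc N} {x : Fin N → ℝ}
    (hp : ∀ β m, p β m x = p' β m x) (hc : ∀ β m, c β m x = c' β m x)
    (α : Fin N →₀ ℕ) (K : ℕ) :
    starW ω' p c α K x = starW ω' p' c' α K x := by
  unfold starW
  refine Finset.sum_congr rfl fun j hj => ?_
  congr 1
  refine Finset.sum_congr rfl fun v _ => Finset.sum_congr rfl fun w _ => ?_
  congr 1
  unfold mulW
  refine Finset.sum_congr rfl fun q hq => Finset.sum_congr rfl fun lm hlm => ?_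
  obtain ⟨Cv, hCv⟩ := itdyW_apply v
  obtain ⟨Cw, hCw⟩ := itdyW_apply w
  rw [hCv p, hCv p', hCw c, hCw c', hp, hc]

lemma starW_congr_left3 {p c c' : Wc N} {x : Fin N → ℝ} {α : Fin N →₀ ℕ} {K : ℕ}
    (hp3 : ∀ β m, totW β + 2*m < 3 → p β m x = 0)
    (hc : ∀ γ m, totW γ + 2*m + 3 ≤ totW α + 2*K → c γ m x = c' γ m x) :
    starW ω' p c α K x = starW ω' p c' α K x := by
  unfold starW
  refine Finset.sum_congr rfl fun j hj => ?_
  rw [Finset.mem_range] at hj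
  congr 1
  refine Finset.sum_congr rfl fun v _ => Finset.sum_congr rfl fun w _ => ?_
  congr 1
  unfold mulW
  refine Finset.sum_congr rfl fun q hq => Finset.sum_congr rfl fun lm hlm => ?_
  rw [Finset.HasAntidiagonal.mem_antidiagonal] at hq hlm
  obtain ⟨Cv, hCv⟩ := itdyW_apply v
  obtain ⟨Cw, hCw⟩ := itdyW_apply w
  rw [hCv p, hCw c, hCw c']
  by_cases h3 : totW (q.1 + ∑ t, Finsupp.single (v t) 1) + 2 * lm.1 < 3
  · rw [hp3 _ _ h3]; ring
  · have h1 : totW q.1 + totW q.2 = totW α := by rw [← totW_add, hq]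
    have h2 : lm.1 + lm.2 = K - j := hlm
    rw [totW_add, totW_finsum] at h3
    have := hc (q.2 + ∑ t, Finsupp.single (w t) 1) lm.2 (by
      rw [totW_add, totW_finsum]; omega)
    rw [this]

lemma starW_congr_right3 {p c c' : Wc N} {x : Fin N → ℝ} {α : Fin N →₀ ℕ} {K : ℕ}
    (hp3 : ∀ β m, totW β + 2*m < 3 → p β m x = 0)
    (hc : ∀ γ m, totW γ + 2*m + 3 ≤ totW α + 2*K → c γ m x = c' γ m x) :
    starW ω' c p α K x = starW ω' c' p α K x := by
  unfold starW
  refine Finset.sum_congr rfl fun j hj => ?_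
  rw [Finset.mem_range] at hj
  congr 1
  refine Finset.sum_congr rfl fun v _ => Finset.sum_congr rfl fun w _ => ?_
  congr 1
  unfold mulW
  refine Finset.sum_congr rfl fun q hq => Finset.sum_congr rfl fun lm hlm => ?_
  rw [Finset.HasAntidiagonal.mem_antidiagonal] at hq hlm
  obtain ⟨Cv, hCv⟩ := itdyW_apply v
  obtain ⟨Cw, hCw⟩ := itdyW_apply w
  rw [hCv c, hCv c', hCw p]
  by_cases h3 : totW (q.2 + ∑ t, Finsupp.single (w t) 1) + 2 * lm.2 < 3
  · rw [hp3 _ _ h3]; ring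
  · have h1 : totW q.1 + totW q.2 = totW α := by rw [← totW_add, hq]
    have h2 : lm.1 + lm.2 = K - j := hlm
    rw [totW_add, totW_finsum] at h3
    have := hc (q.1 + ∑ t, Finsupp.single (v t) 1) lm.1 (by
      rw [totW_add, totW_finsum]; omega)
    rw [this]

lemma itdyW_zero : ∀ {j : ℕ} (v : Fin j → Fin N),
    itdyW v (fun _ _ _ => (0:ℂ)) = fun _ _ _ => 0 := by
  intro j
  induction j with
  | zero => intro v; rfl
  | succ n ih =>
    intro v
    show dyW (v 0) (itdyW (fun t => v t.succ) _) = _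
    rw [ih]
    funext α k x
    simp [dyW]

lemma starW_zero_right (p : Wc N) (α : Fin N →₀ ℕ) (K : ℕ) (x : Fin N → ℝ) :
    starW ω' p (fun _ _ _ => 0) α K x = 0 := by
  simp [starW, itdyW_zero, mulW]

lemma starW_zero_left (p : Wc N) (α : Fin N →₀ ℕ) (K : ℕ) (x : Fin N → ℝ) :
    starW ω' (fun _ _ _ => 0) p α K x = 0 := by
  simp [starW, itdyW_zero, mulW]

lemma starW_left3_vanish {p c : Wc N} {x : Fin N → ℝ} {α : Fin N →₀ ℕ} {K : ℕ}
    (hp3 : ∀ β m, totW β + 2*m < 3 → p β m x = 0)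
    (hc : ∀ γ m, totW γ + 2*m + 3 ≤ totW α + 2*K → c γ m x = 0) :
    starW ω' p c α K x = 0 := by
  rw [starW_congr_left3 ω' hp3 (c' := fun _ _ _ => 0) hc, starW_zero_right]

lemma starW_right3_vanish {p c : Wc N} {x : Fin N → ℝ} {α : Fin N →₀ ℕ} {K : ℕ}
    (hp3 : ∀ β m, totW β + 2*m < 3 → p β m x = 0)
    (hc : ∀ γ m, totW γ + 2*m + 3 ≤ totW α + 2*K → c γ m x = 0) :
    starW ω' c p α K x = 0 := by
  rw [starW_congr_right3 ω' hp3 (c' := fun _ _ _ => 0) hc, starW_zero_left]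

end Aux2
section Aux3
variable {N : ℕ}

lemma fderiv_congr_of_eqOn {U : Set (Fin N → ℝ)} (hU : IsOpen U)
    {f g : (Fin N → ℝ) → ℂ} {x : Fin N → ℝ} (hx : x ∈ U)
    (h : ∀ y ∈ U, f y = g y) : fderiv ℝ f x = fderiv ℝ g x :=
  Filter.EventuallyEq.fderiv_eq (Filter.eventuallyEq_of_mem (hU.mem_nhds hx) h)

lemma nabW_congrU {U : Set (Fin N → ℝ)} (hU : IsOpen U) {b b' : Wc N}
    {β : Fin N →₀ ℕ} {k : ℕ}
    (hb : ∀ γ, totW γ = totW β → ∀ y ∈ U, b γ k y = b' γ k y)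
    (Γ : Fin N → Fin N → Fin N → (Fin N → ℝ) → ℝ) (i : Fin N)
    {x : Fin N → ℝ} (hx : x ∈ U) :
    nabW Γ i b β k x = nabW Γ i b' β k x := by
  unfold nabW dxW
  congr 1
  · rw [fderiv_congr_of_eqOn hU hx (hb β rfl)]
  · refine Finset.sum_congr rfl fun m _ => Finset.sum_congr rfl fun l _ => ?_
    unfold ymulW dyW
    by_cases hl : β l = 0
    · simp [hl]
    · simp only [hl, if_neg, if_false]
      have ht : totW ((β - Finsupp.single l 1) + Finsupp.single m 1) = totW β := by
        rw [totW_add, totW_single]; exact totW_sub_single hl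
      rw [hb _ ht x hx]

lemma nabW_zero_fun (Γ : Fin N → Fin N → Fin N → (Fin N → ℝ) → ℝ) (i : Fin N)
    (β : Fin N →₀ ℕ) (k : ℕ) (x : Fin N → ℝ) :
    nabW Γ i (fun _ _ _ => (0:ℂ)) β k x = 0 := by
  simp [nabW, dxW, ymulW, dyW]

lemma nabW_congr {b b' : Wc N} {β : Fin N →₀ ℕ} {k : ℕ}
    (hb : ∀ γ, totW γ = totW β → b γ k = b' γ k)
    (Γ : Fin N → Fin N → Fin N → (Fin N → ℝ) → ℝ) (i : Fin N) (x : Fin N → ℝ) :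
    nabW Γ i b β k x = nabW Γ i b' β k x :=
  nabW_congrU isOpen_univ (fun γ hγ y _ => by rw [hb γ hγ]) Γ i (Set.mem_univ x)

end Aux3
section Aux4
variable {N : ℕ}
  (ω' : Fin N → Fin N → (Fin N → ℝ) → ℝ)
  (Γ : Fin N → Fin N → Fin N → (Fin N → ℝ) → ℝ)
  (r : Fin N → Wc N) (a0 : ℕ → (Fin N → ℝ) → ℂ)

/-- globally truncated version of `r` -/
noncomputable def rtW : Fin N → Wc N := fun i β m x =>
  if totW β + 2*m < 3 then 0 else r i β m x

lemma rtW_deg3 (i : Fin N) (β : Fin N →₀ ℕ) (m : ℕ) (x : Fin N → ℝ)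
    (h : totW β + 2*m < 3) : rtW r i β m x = 0 := if_pos h

noncomputable def RHSW (i : Fin N) (b : Wc N) : Wc N :=
  fun β k x => nabW Γ i b β k x + ihInvW (commW ω' (rtW r i) b) β k x

lemma D0_rt_eq (b : Wc N) (i : Fin N) (α : Fin N →₀ ℕ) (k : ℕ) (x : Fin N → ℝ) :
    D0 ω' Γ (rtW r) b i α k x = RHSW ω' Γ r i b α k x - dyW i b α k x := by
  show nabW Γ i b α k x - dyW i b α k x + ihInvW (commW ω' (rtW r i) b) α k x
      = nabW Γ i b α k x + ihInvW (commW ω' (rtW r i) b) α k x - dyW i b α k x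
  exact sub_add_eq_add_sub _ _ _

noncomputable def minI (α : Fin N →₀ ℕ) (h : α ≠ 0) : Fin N :=
  α.support.min' (Finsupp.support_nonempty_iff.mpr h)

lemma minI_mem (α : Fin N →₀ ℕ) (h : α ≠ 0) : α (minI α h) ≠ 0 :=
  Finsupp.mem_support_iff.mp (α.support.min'_mem _)

lemma minI_le (α : Fin N →₀ ℕ) (h : α ≠ 0) {l : Fin N} (hl : α l ≠ 0) :
    minI α h ≤ l :=
  Finset.min'_le _ _ (Finsupp.mem_support_iff.mpr hl)

noncomputable def TW (b : Wc N) : Wc N := fun α k x =>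
  if h : α = 0 then a0 k x
  else ((α (minI α h) : ℂ))⁻¹ *
    RHSW ω' Γ r (minI α h) b (α - Finsupp.single (minI α h) 1) k x

lemma TW_zero (b : Wc N) (k : ℕ) : TW ω' Γ r a0 b 0 k = a0 k := by
  funext x; unfold TW; rw [dif_pos rfl]

lemma RHSW_congr {b b' : Wc N} {β : Fin N →₀ ℕ} {k D : ℕ}
    (hb : ∀ γ m, totW γ + 2*m ≤ D → b γ m = b' γ m)
    (hβ : totW β + 2*k ≤ D) (i : Fin N) (x : Fin N → ℝ) :
    RHSW ω' Γ r i b β k x = RHSW ω' Γ r i b' β k x := by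
  have hc : ∀ γ m, totW γ + 2*m + 3 ≤ totW β + 2*(k+1) → b γ m x = b' γ m x := by
    intro γ m h; rw [hb γ m (by omega)]
  unfold RHSW ihInvW commW
  rw [nabW_congr (fun γ hγ => hb γ k (by omega)) Γ i x,
    starW_congr_left3 ω' (fun γ m h => rtW_deg3 r i γ m x h) hc,
    starW_congr_right3 ω' (fun γ m h => rtW_deg3 r i γ m x h) hc]

lemma TW_congr {b b' : Wc N} {D : ℕ}
    (hb : ∀ γ m, totW γ + 2*m ≤ D → b γ m = b' γ m)
    (α : Fin N →₀ ℕ) (k : ℕ) (hα : totW α + 2*k ≤ D + 1) :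
    TW ω' Γ r a0 b α k = TW ω' Γ r a0 b' α k := by
  funext x
  unfold TW
  by_cases h : α = 0
  · rw [dif_pos h, dif_pos h]
  · rw [dif_neg h, dif_neg h]
    congr 1
    have hi : α (minI α h) ≠ 0 := minI_mem α h
    exact RHSW_congr ω' Γ r hb (by have := totW_sub_single hi; omega) _ x

lemma TW_iter_congr : ∀ (n : ℕ) (b b' : Wc N) (α : Fin N →₀ ℕ) (k : ℕ),
    totW α + 2*k < n →
    (TW ω' Γ r a0)^[n] b α k = (TW ω' Γ r a0)^[n] b' α k := by
  intro n
  induction n with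
  | zero => intro _ _ _ _ h; omega
  | succ n ih =>
    intro b b' α k h
    rw [Function.iterate_succ_apply', Function.iterate_succ_apply']
    rcases Nat.eq_zero_or_pos n with hn | hn
    · subst hn
      have hα : α = 0 := totW_eq_zero (by omega)
      subst hα
      rw [TW_zero, TW_zero]
    · exact TW_congr ω' Γ r a0 (D := n - 1)
        (fun γ m hm => ih b b' γ m (by omega)) α k (by omega)

lemma TW_iter_mono {n m : ℕ} (hnm : n ≤ m) (α : Fin N →₀ ℕ) (k : ℕ)
    (h : totW α + 2*k < n) :
    (TW ω' Γ r a0)^[n] (fun _ _ _ => 0) α k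
      = (TW ω' Γ r a0)^[m] (fun _ _ _ => 0) α k := by
  have hm : m = n + (m - n) := by omega
  rw [hm, Function.iterate_add_apply]
  exact TW_iter_congr ω' Γ r a0 n _ _ α k h

noncomputable def aW : Wc N :=
  fun α k => (TW ω' Γ r a0)^[totW α + 2*k + 1] (fun _ _ _ => 0) α k

lemma aW_fixed (α : Fin N →₀ ℕ) (k : ℕ) :
    aW ω' Γ r a0 α k = TW ω' Γ r a0 (aW ω' Γ r a0) α k := by
  by_cases h : α = 0
  · subst h
    rw [TW_zero]
    show (TW ω' Γ r a0)^[totW 0 + 2*k + 1] (fun _ _ _ => 0) 0 k = a0 k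
    rw [Function.iterate_succ_apply', TW_zero]
  · have hd : 1 ≤ totW α := by
      rcases Nat.eq_zero_or_pos (totW α) with h0 | h0
      · exact absurd (totW_eq_zero h0) h
      · exact h0
    set d := totW α + 2*k with hdd
    have h1 : TW ω' Γ r a0 (aW ω' Γ r a0) α k
        = TW ω' Γ r a0 ((TW ω' Γ r a0)^[d] (fun _ _ _ => 0)) α k := by
      refine TW_congr ω' Γ r a0 (D := d - 1) (fun γ m hm => ?_) α k (by omega)
      show (TW ω' Γ r a0)^[totW γ + 2*m + 1] (fun _ _ _ => 0) γ m = _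
      exact TW_iter_mono ω' Γ r a0 (by omega) γ m (by omega)
    rw [h1, ← Function.iterate_succ_apply' (TW ω' Γ r a0) d (fun _ _ _ => 0)]
    rfl

lemma aW_zero (k : ℕ) : aW ω' Γ r a0 0 k = a0 k := by
  rw [aW_fixed, TW_zero]

lemma add_single_apply_self (α : Fin N →₀ ℕ) (i : Fin N) :
    ((α + Finsupp.single i 1 : Fin N →₀ ℕ)) i = α i + 1 := by
  rw [Finsupp.add_apply, Finsupp.single_eq_same]

lemma add_single_ne_zero (α : Fin N →₀ ℕ) (i : Fin N) :
    α + Finsupp.single i 1 ≠ 0 := by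
  intro h
  have h2 := congrArg (fun f : Fin N →₀ ℕ => f i) h
  simp only [add_single_apply_self, Finsupp.coe_zero, Pi.zero_apply] at h2
  omega

lemma minI_add_single (α : Fin N →₀ ℕ) (i : Fin N)
    (hmin : ∀ l ∈ α.support, i ≤ l) :
    minI (α + Finsupp.single i 1) (add_single_ne_zero α i) = i := by
  apply le_antisymm
  · apply minI_le
    rw [add_single_apply_self]
    omega
  · apply Finset.le_min'
    intro l hl
    have hne : ((α + Finsupp.single i 1 : Fin N →₀ ℕ)) l ≠ 0 :=
      Finsupp.mem_support_iff.mp hl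
    by_cases hαl : α l = 0
    · by_cases hil : i = l
      · exact le_of_eq hil
      · exfalso; apply hne
        rw [Finsupp.add_apply, hαl, Finsupp.single_apply, if_neg hil]
        rfl
    · exact hmin l (Finsupp.mem_support_iff.mpr hαl)

/-- The construction equations: `D0` with the truncated `r` vanishes in
direction `i` whenever `i` is `≤` everything in the support. -/
lemma D0_rt_aW (i : Fin N) (α : Fin N →₀ ℕ) (k : ℕ)
    (hmin : ∀ l ∈ α.support, i ≤ l) (x : Fin N → ℝ) :
    D0 ω' Γ (rtW r) (aW ω' Γ r a0) i α k x = 0 := by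
  rw [D0_rt_eq]
  have hdy : dyW i (aW ω' Γ r a0) α k x = RHSW ω' Γ r i (aW ω' Γ r a0) α k x := by
    unfold dyW
    rw [aW_fixed ω' Γ r a0 (α + Finsupp.single i 1) k]
    unfold TW
    rw [dif_neg (add_single_ne_zero α i), minI_add_single α i hmin,
      add_tsub_cancel_right, add_single_apply_self]
    push_cast
    rw [← mul_assoc, mul_inv_cancel₀ (by exact_mod_cast Nat.succ_ne_zero (α i)), one_mul]
  rw [hdy]; ring

end Aux4
section Aux5
variable {N : ℕ} {U : Set (Fin N → ℝ)}
  (ω' : Fin N → Fin N → (Fin N → ℝ) → ℝ)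
  (Γ : Fin N → Fin N → Fin N → (Fin N → ℝ) → ℝ)
  (r : Fin N → Wc N) (a0 : ℕ → (Fin N → ℝ) → ℂ)

lemma contDiffOn_finprod {ι : Type*} (s : Finset ι) (f : ι → (Fin N → ℝ) → ℝ)
    (hf : ∀ i ∈ s, ContDiffOn ℝ (⊤ : ℕ∞) (f i) U) :
    ContDiffOn ℝ (⊤ : ℕ∞) (fun x => ∏ i ∈ s, f i x) U := by
  induction s using Finset.cons_induction with
  | empty => simpa using contDiffOn_const
  | cons i s his ih =>
    simp only [Finset.prod_cons]
    exact (hf i (Finset.mem_cons_self _ _)).mul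
      (ih fun j hj => hf j (Finset.mem_cons_of_mem hj))

lemma contDiffOn_prod_omega (hω' : ∀ i j, ContDiffOn ℝ (⊤ : ℕ∞) (ω' i j) U)
    {j : ℕ} (v w : Fin j → Fin N) :
    ContDiffOn ℝ (⊤ : ℕ∞) (fun x => ((∏ t, ω' (v t) (w t) x : ℝ) : ℂ)) U := by
  have h := contDiffOn_finprod (U := U) (Finset.univ : Finset (Fin j))
    (fun t => ω' (v t) (w t)) (fun t _ => hω' (v t) (w t))
  exact Complex.ofRealCLM.contDiff.comp_contDiffOn h

lemma contDiffOn_starW_left (hω' : ∀ i j, ContDiffOn ℝ (⊤ : ℕ∞) (ω' i j) U)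
    (hr : ∀ i, SmoothW U (r i)) {c : Wc N} {M : ℕ}
    (hc : ∀ γ m, totW γ + 2*m + 3 ≤ M → ContDiffOn ℝ (⊤ : ℕ∞) (c γ m) U)
    (i : Fin N) (β : Fin N →₀ ℕ) (K : ℕ) (hβ : totW β + 2*K ≤ M) :
    ContDiffOn ℝ (⊤ : ℕ∞) (fun x => starW ω' (rtW r i) c β K x) U := by
  unfold starW
  apply ContDiffOn.sum; intro j hj
  apply ContDiffOn.mul contDiffOn_const
  apply ContDiffOn.sum; intro v _
  apply ContDiffOn.sum; intro w _
  apply ContDiffOn.mul (contDiffOn_prod_omega ω' hω' v w)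
  unfold mulW
  apply ContDiffOn.sum; intro q hq
  apply ContDiffOn.sum; intro lm hlm
  obtain ⟨Cv, hCv⟩ := itdyW_apply v
  obtain ⟨Cw, hCw⟩ := itdyW_apply w
  have hfun : (fun x => itdyW v (rtW r i) q.1 lm.1 x * itdyW w c q.2 lm.2 x)
      = fun x => (Cv q.1 * rtW r i (q.1 + ∑ t, Finsupp.single (v t) 1) lm.1 x) *
          (Cw q.2 * c (q.2 + ∑ t, Finsupp.single (w t) 1) lm.2 x) := by
    funext x; rw [hCv, hCw]
  rw [hfun]
  by_cases h3 : totW (q.1 + ∑ t, Finsupp.single (v t) 1) + 2 * lm.1 < 3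
  · refine ContDiffOn.congr (contDiffOn_const (c := (0:ℂ))) (fun x _ => ?_)
    rw [rtW_deg3 r i _ _ x h3]; ring
  · apply ContDiffOn.mul
    · apply ContDiffOn.mul contDiffOn_const
      exact ContDiffOn.congr (hr i _ _) (fun x _ => if_neg h3)
    · apply ContDiffOn.mul contDiffOn_const
      apply hc
      rw [Finset.mem_range] at hj
      rw [Finset.HasAntidiagonal.mem_antidiagonal] at hq hlm
      have h1 : totW q.1 + totW q.2 = totW β := by rw [← totW_add, hq]
      rw [totW_add, totW_finsum] at h3
      rw [totW_add, totW_finsum]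
      omega

lemma contDiffOn_starW_right (hω' : ∀ i j, ContDiffOn ℝ (⊤ : ℕ∞) (ω' i j) U)
    (hr : ∀ i, SmoothW U (r i)) {c : Wc N} {M : ℕ}
    (hc : ∀ γ m, totW γ + 2*m + 3 ≤ M → ContDiffOn ℝ (⊤ : ℕ∞) (c γ m) U)
    (i : Fin N) (β : Fin N →₀ ℕ) (K : ℕ) (hβ : totW β + 2*K ≤ M) :
    ContDiffOn ℝ (⊤ : ℕ∞) (fun x => starW ω' c (rtW r i) β K x) U := by
  unfold starW
  apply ContDiffOn.sum; intro j hj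
  apply ContDiffOn.mul contDiffOn_const
  apply ContDiffOn.sum; intro v _
  apply ContDiffOn.sum; intro w _
  apply ContDiffOn.mul (contDiffOn_prod_omega ω' hω' v w)
  unfold mulW
  apply ContDiffOn.sum; intro q hq
  apply ContDiffOn.sum; intro lm hlm
  obtain ⟨Cv, hCv⟩ := itdyW_apply v
  obtain ⟨Cw, hCw⟩ := itdyW_apply w
  have hfun : (fun x => itdyW v c q.1 lm.1 x * itdyW w (rtW r i) q.2 lm.2 x)
      = fun x => (Cv q.1 * c (q.1 + ∑ t, Finsupp.single (v t) 1) lm.1 x) *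
          (Cw q.2 * rtW r i (q.2 + ∑ t, Finsupp.single (w t) 1) lm.2 x) := by
    funext x; rw [hCv, hCw]
  rw [hfun]
  by_cases h3 : totW (q.2 + ∑ t, Finsupp.single (w t) 1) + 2 * lm.2 < 3
  · refine ContDiffOn.congr (contDiffOn_const (c := (0:ℂ))) (fun x _ => ?_)
    rw [rtW_deg3 r i _ _ x h3]; ring
  · apply ContDiffOn.mul
    · apply ContDiffOn.mul contDiffOn_const
      apply hc
      rw [Finset.mem_range] at hj
      rw [Finset.HasAntidiagonal.mem_antidiagonal] at hq hlm
      have h1 : totW q.1 + totW q.2 = totW β := by rw [← totW_add, hq]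
      rw [totW_add, totW_finsum] at h3
      rw [totW_add, totW_finsum]
      omega
    · apply ContDiffOn.mul contDiffOn_const
      exact ContDiffOn.congr (hr i _ _) (fun x _ => if_neg h3)

lemma contDiffOn_RHSW (hU : IsOpen U)
    (hω' : ∀ i j, ContDiffOn ℝ (⊤ : ℕ∞) (ω' i j) U)
    (hΓ : ∀ k i j, ContDiffOn ℝ (⊤ : ℕ∞) (Γ k i j) U)
    (hr : ∀ i, SmoothW U (r i)) {b : Wc N} {M : ℕ}
    (hb : ∀ γ m, totW γ + 2*m ≤ M → ContDiffOn ℝ (⊤ : ℕ∞) (b γ m) U)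
    (i : Fin N) (β : Fin N →₀ ℕ) (k : ℕ) (hβ : totW β + 2*k ≤ M) :
    ContDiffOn ℝ (⊤ : ℕ∞) (fun x => RHSW ω' Γ r i b β k x) U := by
  unfold RHSW
  apply ContDiffOn.add
  · unfold nabW dxW
    apply ContDiffOn.sub
    · exact ((hb β k (by omega)).fderiv_of_isOpen hU (by simp)).clm_apply contDiffOn_const
    · apply ContDiffOn.sum; intro m _
      apply ContDiffOn.sum; intro l _
      apply ContDiffOn.mul (Complex.ofRealCLM.contDiff.comp_contDiffOn (hΓ m i l))
      unfold ymulW dyW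
      by_cases hl : β l = 0
      · simp only [hl, if_pos]
        exact contDiffOn_const
      · simp only [hl, if_neg, if_false]
        apply ContDiffOn.mul contDiffOn_const
        apply hb
        have h1 := totW_sub_single hl
        have h2 : totW ((β - Finsupp.single l 1) + Finsupp.single m 1) = totW β := by
          rw [totW_add, totW_single]; omega
        omega
  · unfold ihInvW commW
    apply ContDiffOn.mul contDiffOn_const
    apply ContDiffOn.sub
    · exact contDiffOn_starW_left ω' r hω' hr (M := M + 2)
        (fun γ m hm => hb γ m (by omega)) i β (k+1) (by omega)
    · exact contDiffOn_starW_right ω' r hω' hr (M := M + 2)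
        (fun γ m hm => hb γ m (by omega)) i β (k+1) (by omega)

lemma contDiffOn_aW (hU : IsOpen U)
    (hω' : ∀ i j, ContDiffOn ℝ (⊤ : ℕ∞) (ω' i j) U)
    (hΓ : ∀ k i j, ContDiffOn ℝ (⊤ : ℕ∞) (Γ k i j) U)
    (hr : ∀ i, SmoothW U (r i))
    (ha0 : ∀ k, ContDiffOn ℝ (⊤ : ℕ∞) (a0 k) U) :
    ∀ (M : ℕ) (α : Fin N →₀ ℕ) (k : ℕ), totW α + 2*k ≤ M →
      ContDiffOn ℝ (⊤ : ℕ∞) (aW ω' Γ r a0 α k) U := by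
  intro M
  induction M with
  | zero =>
    intro α k h
    have hα : α = 0 := totW_eq_zero (by omega)
    subst hα
    rw [aW_zero]
    exact ha0 k
  | succ M ih =>
    intro α k h
    by_cases h0 : α = 0
    · subst h0; rw [aW_zero]; exact ha0 k
    · have hfun : aW ω' Γ r a0 α k = fun x =>
          ((α (minI α h0) : ℂ))⁻¹ *
          RHSW ω' Γ r (minI α h0) (aW ω' Γ r a0)
            (α - Finsupp.single (minI α h0) 1) k x := by
        funext x
        rw [aW_fixed]
        unfold TW
        rw [dif_neg h0]
      rw [hfun]
      apply ContDiffOn.mul contDiffOn_const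
      have hi := minI_mem α h0
      have hts := totW_sub_single hi
      exact contDiffOn_RHSW ω' Γ r hU hω' hΓ hr (M := M)
        (fun γ m hm => ih γ m hm) (minI α h0) _ k (by omega)

lemma smoothW_aW (hU : IsOpen U)
    (hω' : ∀ i j, ContDiffOn ℝ (⊤ : ℕ∞) (ω' i j) U)
    (hΓ : ∀ k i j, ContDiffOn ℝ (⊤ : ℕ∞) (Γ k i j) U)
    (hr : ∀ i, SmoothW U (r i))
    (ha0 : ∀ k, ContDiffOn ℝ (⊤ : ℕ∞) (a0 k) U) :
    SmoothW U (aW ω' Γ r a0) := fun α k =>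
  contDiffOn_aW ω' Γ r a0 hU hω' hΓ hr ha0 (totW α + 2*k) α k le_rfl

end Aux5
section Aux6
variable {N : ℕ} {U : Set (Fin N → ℝ)}
  (ω' : Fin N → Fin N → (Fin N → ℝ) → ℝ)
  (Γ : Fin N → Fin N → Fin N → (Fin N → ℝ) → ℝ)
  (r : Fin N → Wc N) (a0 : ℕ → (Fin N → ℝ) → ℂ)

lemma D0_r_eq_rt (hr_deg : ∀ i, DegGe3 U (r i)) (b : Wc N) (i : Fin N)
    (α : Fin N →₀ ℕ) (k : ℕ) {x : Fin N → ℝ} (hx : x ∈ U) :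
    D0 ω' Γ r b i α k x = D0 ω' Γ (rtW r) b i α k x := by
  have hp : ∀ β m, r i β m x = rtW r i β m x := by
    intro β m
    unfold rtW
    by_cases h3 : totW β + 2*m < 3
    · rw [if_pos h3]; exact hr_deg i β m h3 x hx
    · rw [if_neg h3]
  unfold D0 ihInvW commW
  rw [starW_congr ω' hp (fun _ _ => rfl) α (k+1),
     starW_congr ω' (fun _ _ => rfl) hp α (k+1)]

lemma D0_aW_vanish (hU : IsOpen U)
    (hω' : ∀ i j, ContDiffOn ℝ (⊤ : ℕ∞) (ω' i j) U)
    (hΓ : ∀ k i j, ContDiffOn ℝ (⊤ : ℕ∞) (Γ k i j) U)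
    (hr_smooth : ∀ i, SmoothW U (r i))
    (hr_deg : ∀ i, DegGe3 U (r i))
    (hr_flat : ∀ a : Wc N, SmoothW U a →
      ∀ (i j : Fin N) (α : Fin N →₀ ℕ) (k : ℕ), ∀ x ∈ U,
        D1 ω' Γ r (D0 ω' Γ r a) i j α k x = 0)
    (ha0 : ∀ k, ContDiffOn ℝ (⊤ : ℕ∞) (a0 k) U) :
    ∀ (i : Fin N) (α : Fin N →₀ ℕ) (k : ℕ), ∀ x ∈ U,
      D0 ω' Γ r (aW ω' Γ r a0) i α k x = 0 := by
  have haW := smoothW_aW ω' Γ r a0 hU hω' hΓ hr_smooth ha0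
  have F1 : ∀ (i : Fin N) (α : Fin N →₀ ℕ) (k : ℕ), (∀ l ∈ α.support, i ≤ l) →
      ∀ x ∈ U, D0 ω' Γ r (aW ω' Γ r a0) i α k x = 0 := by
    intro i α k hmin x hx
    rw [D0_r_eq_rt ω' Γ r hr_deg (aW ω' Γ r a0) i α k hx]
    exact D0_rt_aW ω' Γ r a0 i α k hmin x
  have main : ∀ (d : ℕ) (i : Fin N) (α : Fin N →₀ ℕ) (k : ℕ),
      totW α + 2*k < d → ∀ x ∈ U, D0 ω' Γ r (aW ω' Γ r a0) i α k x = 0 := by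
    intro d
    induction d with
    | zero => intro _ _ _ h; omega
    | succ d ih =>
      intro i α k hd x hx
      by_cases hcase : ∀ l ∈ α.support, i ≤ l
      · exact F1 i α k hcase x hx
      · push_neg at hcase
        obtain ⟨l0, hl0mem, hl0lt⟩ := hcase
        have h0 : α ≠ 0 := by
          intro h; subst h; simp at hl0mem
        have htα : 1 ≤ totW α := by
          rcases Nat.eq_zero_or_pos (totW α) with hz | hz
          · exact absurd (totW_eq_zero hz) h0
          · exact hz
        have hαi0 : α (minI α h0) ≠ 0 := minI_mem α h0
        have hi0l0 : minI α h0 ≤ l0 := minI_le α h0 (Finsupp.mem_support_iff.mp hl0mem)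
        have hi0i : minI α h0 < i := lt_of_le_of_lt hi0l0 hl0lt
        set i0 := minI α h0 with hi0def
        set β := α - Finsupp.single i0 1 with hβdef
        have hβα : β + Finsupp.single i0 1 = α := sub_single_add hαi0
        have htβ : totW β + 1 = totW α := totW_sub_single hαi0
        have ihU : ∀ (i' : Fin N) (γ : Fin N →₀ ℕ) (m : ℕ),
            totW γ + 2*m ≤ totW β + 2*k → ∀ y ∈ U,
            D0 ω' Γ r (aW ω' Γ r a0) i' γ m y = 0 := by
          intro i' γ m hm y hy
          exact ih i' γ m (by omega) y hy
        have hflat := hr_flat (aW ω' Γ r a0) haW i0 i β k x hx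
        simp only [D1, ihInvW] at hflat
        have hn1 : nabW Γ i0 (D0 ω' Γ r (aW ω' Γ r a0) i) β k x = 0 := by
          rw [nabW_congrU hU (b' := fun _ _ _ => 0)
            (fun γ hγ y hy => ihU i γ k (by omega) y hy) Γ i0 hx]
          exact nabW_zero_fun Γ i0 β k x
        have hn2 : nabW Γ i (D0 ω' Γ r (aW ω' Γ r a0) i0) β k x = 0 := by
          rw [nabW_congrU hU (b' := fun _ _ _ => 0)
            (fun γ hγ y hy => ihU i0 γ k (by omega) y hy) Γ i hx]
          exact nabW_zero_fun Γ i β k x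
        have hs1 : (∑ m, (Γ m i0 i x : ℂ) * D0 ω' Γ r (aW ω' Γ r a0) m β k x) = 0 :=
          Finset.sum_eq_zero fun m _ => by
            rw [ihU m β k (by omega) x hx]; ring
        have hs2 : (∑ m, (Γ m i i0 x : ℂ) * D0 ω' Γ r (aW ω' Γ r a0) m β k x) = 0 :=
          Finset.sum_eq_zero fun m _ => by
            rw [ihU m β k (by omega) x hx]; ring
        have hp3i0 : ∀ γ m, totW γ + 2*m < 3 → r i0 γ m x = 0 :=
          fun γ m h => hr_deg i0 γ m h x hx
        have hp3i : ∀ γ m, totW γ + 2*m < 3 → r i γ m x = 0 :=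
          fun γ m h => hr_deg i γ m h x hx
        have hbvan : ∀ (i' : Fin N) (γ : Fin N →₀ ℕ) (m : ℕ),
            totW γ + 2*m + 3 ≤ totW β + 2*(k+1) →
            D0 ω' Γ r (aW ω' Γ r a0) i' γ m x = 0 :=
          fun i' γ m h => ihU i' γ m (by omega) x hx
        have hst1 : starW ω' (r i0) (D0 ω' Γ r (aW ω' Γ r a0) i) β (k+1) x = 0 :=
          starW_left3_vanish ω' hp3i0 (hbvan i)
        have hst2 : starW ω' (r i) (D0 ω' Γ r (aW ω' Γ r a0) i0) β (k+1) x = 0 :=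
          starW_left3_vanish ω' hp3i (hbvan i0)
        have hst3 : starW ω' (D0 ω' Γ r (aW ω' Γ r a0) i0) (r i) β (k+1) x = 0 :=
          starW_right3_vanish ω' hp3i (hbvan i0)
        have hst4 : starW ω' (D0 ω' Γ r (aW ω' Γ r a0) i) (r i0) β (k+1) x = 0 :=
          starW_right3_vanish ω' hp3i0 (hbvan i)
        rw [hn1, hn2, hs1, hs2, hst1, hst2, hst3, hst4] at hflat
        have hdy : dyW i0 (D0 ω' Γ r (aW ω' Γ r a0) i) β k x
            = dyW i (D0 ω' Γ r (aW ω' Γ r a0) i0) β k x := by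
          linear_combination -hflat
        unfold dyW at hdy
        rw [hβα] at hdy
        have hz : D0 ω' Γ r (aW ω' Γ r a0) i0 (β + Finsupp.single i 1) k x = 0 := by
          apply F1 i0 _ k ?_ x hx
          intro l hl
          have hne : ((β + Finsupp.single i 1 : Fin N →₀ ℕ)) l ≠ 0 :=
            Finsupp.mem_support_iff.mp hl
          by_cases hli : l = i
          · subst hli; exact le_of_lt hi0i
          · apply minI_le α h0
            rw [Finsupp.add_apply, Finsupp.single_apply,
              if_neg (fun h => hli h.symm)] at hne
            have hle : β l ≤ α l := by
              rw [hβdef, Finsupp.tsub_apply]; omega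
            omega
        rw [hz, mul_zero] at hdy
        have hne0 : ((β i0 : ℂ) + 1) ≠ 0 := by
          exact_mod_cast Nat.succ_ne_zero (β i0)
        exact (mul_eq_zero.mp hdy).resolve_left hne0
  intro i α k x hx
  exact main (totW α + 2*k + 1) i α k (by omega) x hx

lemma aW_unique (hU : IsOpen U) (hr_deg : ∀ i, DegGe3 U (r i))
    {a' : Wc N}
    (ha'flat : ∀ (i : Fin N) (α : Fin N →₀ ℕ) (k : ℕ), ∀ x ∈ U,
      D0 ω' Γ r a' i α k x = 0)
    (ha'0 : ∀ k : ℕ, ∀ x ∈ U, a' 0 k x = a0 k x)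
    (haflat : ∀ (i : Fin N) (α : Fin N →₀ ℕ) (k : ℕ), ∀ x ∈ U,
      D0 ω' Γ r (aW ω' Γ r a0) i α k x = 0) :
    ∀ (d : ℕ) (α : Fin N →₀ ℕ) (k : ℕ), totW α + 2*k < d → ∀ x ∈ U,
      a' α k x = aW ω' Γ r a0 α k x := by
  intro d
  induction d with
  | zero => intro _ _ h; omega
  | succ d ih =>
    intro α k hd x hx
    by_cases h0 : α = 0
    · subst h0; rw [aW_zero]; exact ha'0 k x hx
    · have hαi0 : α (minI α h0) ≠ 0 := minI_mem α h0
      have htα : 1 ≤ totW α := by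
        rcases Nat.eq_zero_or_pos (totW α) with hz | hz
        · exact absurd (totW_eq_zero hz) h0
        · exact hz
      set i0 := minI α h0 with hi0def
      set β := α - Finsupp.single i0 1 with hβdef
      have hβα : β + Finsupp.single i0 1 = α := sub_single_add hαi0
      have htβ : totW β + 1 = totW α := totW_sub_single hαi0
      have e1 := ha'flat i0 β k x hx
      have e2 := haflat i0 β k x hx
      simp only [D0, ihInvW, commW] at e1 e2
      have hp3 : ∀ γ m, totW γ + 2*m < 3 → r i0 γ m x = 0 :=
        fun γ m h => hr_deg i0 γ m h x hx
      have hcc : ∀ γ m, totW γ + 2*m + 3 ≤ totW β + 2*(k+1) →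
          a' γ m x = aW ω' Γ r a0 γ m x := by
        intro γ m h; exact ih γ m (by omega) x hx
      have hnab : nabW Γ i0 a' β k x = nabW Γ i0 (aW ω' Γ r a0) β k x :=
        nabW_congrU hU (fun γ hγ y hy => ih γ k (by omega) y hy) Γ i0 hx
      have hstar1 := starW_congr_left3 ω' (p := r i0) hp3 hcc
      have hstar2 := starW_congr_right3 ω' (p := r i0) hp3 hcc
      rw [hnab, hstar1, hstar2] at e1
      have hdy : dyW i0 a' β k x = dyW i0 (aW ω' Γ r a0) β k x := by
        linear_combination e2 - e1
      unfold dyW at hdy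
      rw [hβα] at hdy
      have hne0 : ((β i0 : ℂ) + 1) ≠ 0 := by
        exact_mod_cast Nat.succ_ne_zero (β i0)
      exact mul_left_cancel₀ hne0 hdy

end Aux6
theorem unique_flat_section_with_given_value_at_y_zero
    (N : ℕ) (hN : 1 ≤ N) (U : Set (Fin N → ℝ)) (hU : IsOpen U)
    (ω ω' : Fin N → Fin N → (Fin N → ℝ) → ℝ)
    (Γ : Fin N → Fin N → Fin N → (Fin N → ℝ) → ℝ)
    (hω_smooth : ∀ i j, ContDiffOn ℝ (⊤ : ℕ∞) (ω i j) U)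
    (hω_anti : ∀ i j x, ω i j x = - ω j i x)
    (hω_inv : ∀ i k, ∀ x ∈ U, (∑ j, ω' i j x * ω j k x) = if i = k then (1:ℝ) else 0)
    (hω'_smooth : ∀ i j, ContDiffOn ℝ (⊤ : ℕ∞) (ω' i j) U)
    (hΓ_smooth : ∀ k i j, ContDiffOn ℝ (⊤ : ℕ∞) (Γ k i j) U)
    (hΓ_symm : ∀ k i j x, Γ k i j x = Γ k j i x)
    (hcompat : ∀ i j k, ∀ x ∈ U,
      (fun x' => fderiv ℝ (ω j k) x' (Pi.single i 1)) x
        - (∑ l, Γ l i j x * ω l k x) - (∑ l, Γ l i k x * ω j l x) = 0)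
    -- the Fedosov 1-form r and its properties
    (r : Fin N → Wc N)
    (hr_smooth : ∀ i, SmoothW U (r i))
    (hr_deg : ∀ i, DegGe3 U (r i))
    (hr_flat : ∀ a : Wc N, SmoothW U a →
      ∀ (i j : Fin N) (α : Fin N →₀ ℕ) (k : ℕ), ∀ x ∈ U,
        D1 ω' Γ r (D0 ω' Γ r a) i j α k x = 0) :
    ∀ a0 : ℕ → (Fin N → ℝ) → ℂ, (∀ k, ContDiffOn ℝ (⊤ : ℕ∞) (a0 k) U) →
      ∃ a : Wc N,
        (SmoothW U a ∧
         (∀ (i : Fin N) (α : Fin N →₀ ℕ) (k : ℕ), ∀ x ∈ U,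
            D0 ω' Γ r a i α k x = 0) ∧
         (∀ k : ℕ, ∀ x ∈ U, a 0 k x = a0 k x)) ∧
        (∀ a' : Wc N,
          (SmoothW U a' ∧
           (∀ (i : Fin N) (α : Fin N →₀ ℕ) (k : ℕ), ∀ x ∈ U,
              D0 ω' Γ r a' i α k x = 0) ∧
           (∀ k : ℕ, ∀ x ∈ U, a' 0 k x = a0 k x)) →
          ∀ (α : Fin N →₀ ℕ) (k : ℕ), ∀ x ∈ U, a' α k x = a α k x) := by
  intro a0 ha0
  refine ⟨aW ω' Γ r a0,
    ⟨smoothW_aW ω' Γ r a0 hU hω'_smooth hΓ_smooth hr_smooth ha0,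
     D0_aW_vanish ω' Γ r a0 hU hω'_smooth hΓ_smooth hr_smooth hr_deg hr_flat ha0,
     fun k x hx => by rw [aW_zero]⟩, ?_⟩
  rintro a' ⟨ha's, ha'flat, ha'0⟩ α k x hx
  exact aW_unique ω' Γ r a0 hU hr_deg ha'flat ha'0
    (D0_aW_vanish ω' Γ r a0 hU hω'_smooth hΓ_smooth hr_smooth hr_deg hr_flat ha0)
    (totW α + 2*k + 1) α k (by omega) x hx
end

section
/- Suppose r = (r_i) is a W-valued 1-form each of whose components contains only terms of total degree ≥ 3, and suppose D(Da) = 0 for all a ∈ W. Let a_0, b_0 be smooth complex-valued functions on U (independent of ħ and y), and let a, b ∈ W be their unique D-flat lifts (Da = Db = 0, a|_{y=0} = a_0, b|_{y=0} = b_0). Then the star product satisfies the correspondence principle: (a ⋆ b)|_{y=0, ħ=0} = a_0 b_0, and the element (i/ħ)(a ⋆ b − b ⋆ a) of W satisfies ((i/ħ)(a ⋆ b − b ⋆ a))|_{y=0, ħ=0} = ω^{ij}(x) (∂a_0/∂x^i)(∂b_0/∂x^j), i.e. it reproduces the Poisson bracket of a_0 and b_0 determined by ω. -/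
/-!
Context: a symmetric symplectic connection `Γ` for `ω` on an open `U ⊆ ℝ^N`;
`W` is the algebra of formal power series in `y^1,…,y^N` and `ħ` with smooth
coefficients on `U`, with the fibrewise Weyl–Moyal product `⋆`; `D` is the flat
Fedosov-type connection built from a `W`-valued 1-form `r` of degree `≥ 3`.

STATEMENT 4 (correspondence principle): if `a`, `b` are the `D`-flat lifts of
smooth (`ħ`- and `y`-independent) functions `a_0`, `b_0`, then
`(a ⋆ b)|_{y=0,ħ=0} = a_0 b_0` and
`((i/ħ)(a ⋆ b − b ⋆ a))|_{y=0,ħ=0} = ω^{ij} ∂_i a_0 ∂_j b_0`.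
-/

open scoped BigOperators


section Aux
variable {N : ℕ}

lemma mulW_00 (a b : Wc N) (x : Fin N → ℝ) :
    mulW a b 0 0 x = a 0 0 x * b 0 0 x := by
  simp [mulW, Finsupp.antidiagonal_zero, Finset.Nat.antidiagonal_zero]

lemma mulW_01 (a b : Wc N) (x : Fin N → ℝ) :
    mulW a b 0 1 x = a 0 0 x * b 0 1 x + a 0 1 x * b 0 0 x := by
  have h1 : Finset.HasAntidiagonal.antidiagonal (1 : ℕ) = {(0,1),(1,0)} := by decide
  simp [mulW, Finsupp.antidiagonal_zero, h1]

lemma dyW_00 (a : Wc N) (x : Fin N → ℝ) (i : Fin N) :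
    dyW i a 0 0 x = a (Finsupp.single i 1) 0 x := by
  simp [dyW]

lemma sum_fin_one {M : Type*} [AddCommMonoid M] (F : Fin N → M) :
    ∑ v : Fin 1 → Fin N, F (v 0) = ∑ i, F i :=
  Fintype.sum_equiv (Equiv.funUnique (Fin 1) (Fin N)) _ _ (fun _ => rfl)

lemma starW_00 (ω' : Fin N → Fin N → (Fin N → ℝ) → ℝ) (a b : Wc N) (x : Fin N → ℝ) :
    starW ω' a b 0 0 x = a 0 0 x * b 0 0 x := by
  simp [starW, itdyW, mulW_00]

lemma starW_01 (ω' : Fin N → Fin N → (Fin N → ℝ) → ℝ) (a b : Wc N) (x : Fin N → ℝ) :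
    starW ω' a b 0 1 x = (a 0 0 x * b 0 1 x + a 0 1 x * b 0 0 x)
    + (-Complex.I/2) * ∑ i, ∑ j, (ω' i j x : ℂ)
        * (a (Finsupp.single i 1) 0 x * b (Finsupp.single j 1) 0 x) := by
  rw [starW]
  rw [Finset.sum_range_succ, Finset.sum_range_one]
  simp only [pow_zero, Nat.factorial_zero, Nat.cast_one, div_one, pow_one,
    Nat.factorial_one, itdyW, Fin.prod_univ_one]
  rw [mulW_01]
  congr 1
  · simp
  · congr 1
    rw [← sum_fin_one (fun i => ∑ j, (ω' i j x : ℂ)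
        * (a (Finsupp.single i 1) 0 x * b (Finsupp.single j 1) 0 x))]
    apply Finset.sum_congr rfl
    intro v _
    rw [← sum_fin_one (fun j => (ω' (v 0) j x : ℂ)
        * (a (Finsupp.single (v 0) 1) 0 x * b (Finsupp.single j 1) 0 x))]
    apply Finset.sum_congr rfl
    intro w _
    rw [mulW_00, dyW_00, dyW_00]

lemma single_deg (i : Fin N) : ((Finsupp.single i 1).sum fun _ n => n) = 1 := by
  simp [Finsupp.sum_single_index]

open Matrix in
lemma omega'_anti (ω ω' : Fin N → Fin N → (Fin N → ℝ) → ℝ) (x : Fin N → ℝ)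
    (hω_anti : ∀ i j, ω i j x = - ω j i x)
    (hω_inv : ∀ i k, (∑ j, ω' i j x * ω j k x) = if i = k then (1:ℝ) else 0) :
    ∀ i j, ω' j i x = - ω' i j x := by
  set M : Matrix (Fin N) (Fin N) ℝ := Matrix.of (fun i j => ω i j x) with hM
  set P : Matrix (Fin N) (Fin N) ℝ := Matrix.of (fun i j => ω' i j x) with hP
  have h1 : P * M = 1 := by
    ext i k
    simp [Matrix.mul_apply, hM, hP, hω_inv i k, Matrix.one_apply]
  have h2 : M * P = 1 := mul_eq_one_comm.mp h1
  have h3 : Pᵀ * Mᵀ = 1 := by rw [← Matrix.transpose_mul, h2, Matrix.transpose_one]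
  have hT : Mᵀ = -M := by
    ext i j; simp [hM, Matrix.transpose_apply, hω_anti j i]
  have h4 : (-Pᵀ) * M = 1 := by
    rw [Matrix.neg_mul, ← Matrix.mul_neg, ← hT, h3]
  have h5 : -Pᵀ = P := by
    calc -Pᵀ = (-Pᵀ) * (M * P) := by rw [h2, Matrix.mul_one]
    _ = ((-Pᵀ) * M) * P := by rw [Matrix.mul_assoc]
    _ = P := by rw [h4, Matrix.one_mul]
  intro i j
  have := congrFun (congrFun h5 i) j
  simpa [hP, Matrix.transpose_apply, neg_eq_iff_eq_neg] using this

end Aux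

theorem flat_sections_satisfy_correspondence_principle
    (N : ℕ) (hN : 1 ≤ N) (U : Set (Fin N → ℝ)) (hU : IsOpen U)
    (ω ω' : Fin N → Fin N → (Fin N → ℝ) → ℝ)
    (Γ : Fin N → Fin N → Fin N → (Fin N → ℝ) → ℝ)
    (hω_smooth : ∀ i j, ContDiffOn ℝ (⊤ : ℕ∞) (ω i j) U)
    (hω_anti : ∀ i j x, ω i j x = - ω j i x)
    (hω_inv : ∀ i k, ∀ x ∈ U, (∑ j, ω' i j x * ω j k x) = if i = k then (1:ℝ) else 0)
    (hω'_smooth : ∀ i j, ContDiffOn ℝ (⊤ : ℕ∞) (ω' i j) U)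
    (hΓ_smooth : ∀ k i j, ContDiffOn ℝ (⊤ : ℕ∞) (Γ k i j) U)
    (hΓ_symm : ∀ k i j x, Γ k i j x = Γ k j i x)
    (hcompat : ∀ i j k, ∀ x ∈ U,
      (fun x' => fderiv ℝ (ω j k) x' (Pi.single i 1)) x
        - (∑ l, Γ l i j x * ω l k x) - (∑ l, Γ l i k x * ω j l x) = 0)
    -- the Fedosov 1-form r and its properties
    (r : Fin N → Wc N)
    (hr_smooth : ∀ i, SmoothW U (r i))
    (hr_deg : ∀ i, DegGe3 U (r i))
    (hr_flat : ∀ a : Wc N, SmoothW U a →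
      ∀ (i j : Fin N) (α : Fin N →₀ ℕ) (k : ℕ), ∀ x ∈ U,
        D1 ω' Γ r (D0 ω' Γ r a) i j α k x = 0)
    -- the observables a_0, b_0 and their D-flat lifts a, b
    (a0 b0 : (Fin N → ℝ) → ℂ)
    (ha0 : ContDiffOn ℝ (⊤ : ℕ∞) a0 U) (hb0 : ContDiffOn ℝ (⊤ : ℕ∞) b0 U)
    (a b : Wc N)
    (ha_smooth : SmoothW U a) (hb_smooth : SmoothW U b)
    (ha_flat : ∀ (i : Fin N) (α : Fin N →₀ ℕ) (k : ℕ), ∀ x ∈ U,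
      D0 ω' Γ r a i α k x = 0)
    (hb_flat : ∀ (i : Fin N) (α : Fin N →₀ ℕ) (k : ℕ), ∀ x ∈ U,
      D0 ω' Γ r b i α k x = 0)
    (ha_bc : ∀ k : ℕ, ∀ x ∈ U, a 0 k x = if k = 0 then a0 x else 0)
    (hb_bc : ∀ k : ℕ, ∀ x ∈ U, b 0 k x = if k = 0 then b0 x else 0) :
    ∀ x ∈ U,
      -- (a ⋆ b)|_{y=0, ħ=0} = a_0 b_0
      starW ω' a b 0 0 x = a0 x * b0 x ∧
      -- ((i/ħ)(a ⋆ b − b ⋆ a))|_{y=0, ħ=0} = ω^{ij} ∂_i a_0 ∂_j b_0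
      ihInvW (commW ω' a b) 0 0 x =
        ∑ i, ∑ j, (ω' i j x : ℂ)
          * fderiv ℝ a0 x (Pi.single i 1) * fderiv ℝ b0 x (Pi.single j 1) := by
  -- ω' is antisymmetric on U
  have hanti : ∀ x ∈ U, ∀ i j, (ω' j i x : ℂ) = -(ω' i j x : ℂ) := by
    intro x hx i j
    have := omega'_anti ω ω' x (fun i j => hω_anti i j x)
      (fun i k => hω_inv i k x hx) i j
    rw [this]; push_cast; ring
  -- key: coefficients of D-flat lifts at degree-1 monomials are the derivatives
  have key : ∀ (c : Wc N) (c0 : (Fin N → ℝ) → ℂ),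
      (∀ (i : Fin N) (α : Fin N →₀ ℕ) (k : ℕ), ∀ x ∈ U, D0 ω' Γ r c i α k x = 0) →
      (∀ k : ℕ, ∀ x ∈ U, c 0 k x = if k = 0 then c0 x else 0) →
      ∀ x ∈ U, ∀ i, c (Finsupp.single i 1) 0 x = fderiv ℝ c0 x (Pi.single i 1) := by
    intro c c0 hflat hbc x hx i
    have h := hflat i 0 0 x hx
    rw [D0] at h
    -- r-coefficients that occur vanish by the degree condition
    have r00 : r i 0 0 x = 0 := hr_deg i 0 0 (by simp) x hx
    have r01 : r i 0 1 x = 0 := hr_deg i 0 1 (by simp) x hx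
    have rs : ∀ j, r i (Finsupp.single j 1) 0 x = 0 := fun j =>
      hr_deg i (Finsupp.single j 1) 0 (by simp [single_deg]) x hx
    have hstar1 : starW ω' (r i) c 0 1 x = 0 := by
      rw [starW_01]; simp [r00, r01, rs]
    have hstar2 : starW ω' c (r i) 0 1 x = 0 := by
      rw [starW_01]; simp [r00, r01, rs]
    have hcomm : ihInvW (commW ω' (r i) c) 0 0 x = 0 := by
      simp [ihInvW, commW, hstar1, hstar2]
    have hymul : ∀ l m, ymulW l (dyW m c) (0 : Fin N →₀ ℕ) 0 x = 0 := by
      intro l m; simp [ymulW]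
    have hnab : nabW Γ i c 0 0 x = dxW i c 0 0 x := by
      simp [nabW, hymul]
    have hdx : dxW i c 0 0 x = fderiv ℝ c0 x (Pi.single i 1) := by
      have heq : c 0 0 =ᶠ[nhds x] c0 := by
        filter_upwards [hU.mem_nhds hx] with y hy
        simpa using hbc 0 y hy
      rw [dxW, heq.fderiv_eq]
    rw [hcomm, hnab, hdx, dyW_00] at h
    linear_combination -h
  intro x hx
  have ha00 : a 0 0 x = a0 x := by simpa using ha_bc 0 x hx
  have hb00 : b 0 0 x = b0 x := by simpa using hb_bc 0 x hx
  have ha01 : a 0 1 x = 0 := by simpa using ha_bc 1 x hx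
  have hb01 : b 0 1 x = 0 := by simpa using hb_bc 1 x hx
  have hA : ∀ i, a (Finsupp.single i 1) 0 x = fderiv ℝ a0 x (Pi.single i 1) :=
    key a a0 ha_flat ha_bc x hx
  have hB : ∀ i, b (Finsupp.single i 1) 0 x = fderiv ℝ b0 x (Pi.single i 1) :=
    key b b0 hb_flat hb_bc x hx
  constructor
  · rw [starW_00, ha00, hb00]
  · rw [show ihInvW (commW ω' a b) 0 0 x
        = Complex.I * (starW ω' a b 0 1 x - starW ω' b a 0 1 x) from rfl]
    rw [starW_01, starW_01]
    simp only [ha00, hb00, ha01, hb01, mul_zero, zero_mul, add_zero, zero_add]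
    simp only [hA, hB]
    set A : Fin N → ℂ := fun i => fderiv ℝ a0 x (Pi.single i 1) with hAdef
    set B : Fin N → ℂ := fun i => fderiv ℝ b0 x (Pi.single i 1) with hBdef
    have hswap : ∑ i, ∑ j, (ω' i j x : ℂ) * (B i * A j)
        = - ∑ i, ∑ j, (ω' i j x : ℂ) * (A i * B j) := by
      rw [Finset.sum_comm, ← Finset.sum_neg_distrib]
      apply Finset.sum_congr rfl
      intro i _
      rw [← Finset.sum_neg_distrib]
      apply Finset.sum_congr rfl
      intro j _
      rw [hanti x hx i j]; ring
    rw [hswap]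
    have hrhs : ∑ i, ∑ j, (ω' i j x : ℂ) * fderiv ℝ a0 x (Pi.single i 1)
          * fderiv ℝ b0 x (Pi.single j 1)
        = ∑ i, ∑ j, (ω' i j x : ℂ) * (A i * B j) := by
      apply Finset.sum_congr rfl; intro i _
      apply Finset.sum_congr rfl; intro j _
      rw [hAdef, hBdef]; ring
    ring_nf
    rw [Complex.I_sq]
    ring_nf
    simp only [hAdef, hBdef]
    ring
end

section
/- Let A_{ij} ∈ ℝ[y^1,…,y^N] (1 ≤ i,j ≤ N) be polynomials satisfying A_{ij} = −A_{ji} and the cocycle condition δ_i A_{jk} + δ_j A_{ki} + δ_k A_{ij} = 0 for all i, j, k. Then there exist polynomials C_1,…,C_N ∈ ℝ[y^1,…,y^N] such that A_{ij} = δ_i C_j − δ_j C_i for all i, j. (This is the paper's Lemma, a generalization of the Poincaré lemma, which reduces to the standard algebraic Poincaré lemma when K is the identity matrix.) -/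
/-!
This is the algebraic Poincaré lemma written in the frame `δ_i`. With `K'` the inverse of `K`,
the linear forms `u_a = K'_{ma} y^m` are coordinates dual to the frame (`δ_i u_a = [i = a]`), and
in them the Euler operator `y^m ∂_m` reads `u_a δ_a`. The homotopy operator `T_k`, scaling a
monomial of degree `d` by `1 / (d + k)`, satisfies `δ_i T_k = T_{k+1} δ_i` and
`u_a T_3 (δ_a f) + 2 T_2 f = f`. For a closed antisymmetric `A`, the potential
`C_j = u_a T_2 (A_{aj})` then has `δ_i C_j - δ_j C_i = 2 T_2 A_{ij} + u_a T_3 (δ_a A_{ij}) = A_{ij}`,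
where the cocycle condition turns `δ_i A_{aj} - δ_j A_{ai}` into `δ_a A_{ij}`.
-/

/-- The operator `δ_i = K_i^m ∂/∂y^m` on `ℝ[y^1,…,y^N]`. -/
noncomputable def delK {N : ℕ} (K : Matrix (Fin N) (Fin N) ℝ) (i : Fin N)
    (f : MvPolynomial (Fin N) ℝ) : MvPolynomial (Fin N) ℝ :=
  ∑ m, MvPolynomial.C (K i m) * MvPolynomial.pderiv m f

open MvPolynomial

theorem Derivation.cocycle_eq_sub_of_homotopy {ι R S : Type*} [Fintype ι] [DecidableEq ι]
    [CommRing R] [CommRing S] [Algebra R S]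
    (d : ι → Derivation R S S) (u : ι → S) (hdu : ∀ i j, d i (u j) = if i = j then 1 else 0)
    (T T' : S →ₗ[R] S) (hdT : ∀ i f, d i (T f) = T' (d i f))
    (hT : ∀ f, ∑ a, u a * T' (d a f) + 2 • T f = f)
    (A : ι → ι → S) (hA_anti : ∀ i j, A i j = -A j i)
    (hA_cocycle : ∀ i j k, d i (A j k) + d j (A k i) + d k (A i j) = 0) (i j : ι) :
    A i j = d i (∑ a, u a * T (A a j)) - d j (∑ a, u a * T (A a i)) := by
  have hd : ∀ b c, d b (∑ a, u a * T (A a c)) = T (A b c) + ∑ a, u a * T' (d b (A a c)) := by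
    intro b c
    simp [map_sum, Derivation.leibniz, hdu, hdT, Finset.sum_add_distrib, add_comm]
  have hcyc : ∀ a, d i (A a j) - d j (A a i) = d a (A i j) := by
    intro a
    have h := hA_cocycle a i j
    rw [hA_anti j a, map_neg] at h
    linear_combination -h
  have hsum : ∑ a, u a * T' (d i (A a j)) - ∑ a, u a * T' (d j (A a i)) =
      ∑ a, u a * T' (d a (A i j)) := by
    simp only [← Finset.sum_sub_distrib, ← mul_sub, ← map_sub, hcyc]
  rw [hd, hd, hA_anti j i, map_neg]
  linear_combination -hsum - hT (A i j)

theorem Finsupp.degree_sub_single_add_one {σ : Type*} {s : σ →₀ ℕ} {i : σ} (h : s i ≠ 0) :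
    (s - Finsupp.single i 1).degree + 1 = s.degree := by
  have hle : Finsupp.single i 1 ≤ s := by
    simpa [Finsupp.single_le_iff, Nat.one_le_iff_ne_zero] using h
  conv_rhs => rw [← tsub_add_cancel_of_le hle]
  rw [map_add, Finsupp.degree_single]

namespace MvPolynomial

section Homotopy

variable {σ R : Type*} [Field R]

/-- Over `ℝ` this is `f ↦ ∫₀¹ t ^ (k - 1) f (t • y) dt`. -/
noncomputable def homotopyOp (k : ℕ) : MvPolynomial σ R →ₗ[R] MvPolynomial σ R :=
  (basisMonomials σ R).constr R fun s => ((s.degree + k : ℕ) : R)⁻¹ • monomial s 1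

theorem homotopyOp_monomial (k : ℕ) (s : σ →₀ ℕ) (r : R) :
    homotopyOp k (monomial s r) = monomial s (((s.degree + k : ℕ) : R)⁻¹ * r) := by
  have hs : monomial s r = r • basisMonomials σ R s := by simp [smul_monomial]
  rw [hs, map_smul, homotopyOp, Module.Basis.constr_basis, smul_smul, smul_monomial, smul_eq_mul,
    mul_one, mul_comm]

theorem pderiv_homotopyOp (k : ℕ) (i : σ) (f : MvPolynomial σ R) :
    pderiv i (homotopyOp k f) = homotopyOp (k + 1) (pderiv i f) := by
  induction f using MvPolynomial.induction_on' with
  | monomial s r =>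
    rw [homotopyOp_monomial, pderiv_monomial, pderiv_monomial, homotopyOp_monomial]
    rcases eq_or_ne (s i) 0 with h | h
    · simp [h]
    · rw [← Finsupp.degree_sub_single_add_one h]
      ring_nf
  | add p q hp hq => simp only [map_add, hp, hq]

theorem X_mul_homotopyOp_pderiv_monomial (k : ℕ) (i : σ) (s : σ →₀ ℕ) (r : R) :
    X i * homotopyOp (k + 1) (pderiv i (monomial s r)) =
      monomial s (((s.degree + k : ℕ) : R)⁻¹ * s i * r) := by
  rw [pderiv_monomial, homotopyOp_monomial]
  rcases eq_or_ne (s i) 0 with h | h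
  · simp [h]
  · rw [X, monomial_mul, ← Finsupp.degree_sub_single_add_one h, add_tsub_cancel_of_le]
    · ring_nf
    · simpa [Finsupp.single_le_iff, Nat.one_le_iff_ne_zero] using h

theorem sum_X_mul_homotopyOp_pderiv [CharZero R] [Fintype σ] {k : ℕ} (hk : k ≠ 0)
    (f : MvPolynomial σ R) :
    ∑ i, X i * homotopyOp (k + 1) (pderiv i f) + k • homotopyOp k f = f := by
  induction f using MvPolynomial.induction_on' with
  | monomial s r =>
    simp_rw [X_mul_homotopyOp_pderiv_monomial, homotopyOp_monomial, ← map_sum, ← map_nsmul,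
      ← map_add]
    congr 1
    have hpos : ((s.degree + k : ℕ) : R) ≠ 0 := Nat.cast_ne_zero.2 (by omega)
    rw [← Finset.sum_mul, ← Finset.mul_sum, ← Nat.cast_sum, ← Finsupp.degree_eq_sum,
      nsmul_eq_mul]
    field_simp
    push_cast
    ring
  | add p q hp hq =>
    simp only [map_add, mul_add, Finset.sum_add_distrib, smul_add]
    linear_combination hp + hq

end Homotopy

section Frame

variable {σ R : Type*} [Fintype σ] [CommRing R]

noncomputable def pderivAlong (v : σ → R) : Derivation R (MvPolynomial σ R) (MvPolynomial σ R) :=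
  ∑ m, v m • pderiv m

theorem pderivAlong_apply (v : σ → R) (f : MvPolynomial σ R) :
    pderivAlong v f = ∑ m, C (v m) * pderiv m f := by
  rw [pderivAlong, ← Derivation.coeFnAddMonoidHom_apply, map_sum, Finset.sum_apply]
  simp [Derivation.coeFnAddMonoidHom_apply, C_mul']

noncomputable def linearForm (w : σ → R) : MvPolynomial σ R :=
  ∑ m, C (w m) * X m

theorem pderivAlong_linearForm [DecidableEq σ] (v w : σ → R) :
    pderivAlong v (linearForm w) = C (v ⬝ᵥ w) := by
  simp [pderivAlong_apply, linearForm, dotProduct, pderiv_X, Pi.single_apply, mul_comm]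

theorem sum_linearForm_mul_pderivAlong {ι : Type*} [Fintype ι] [DecidableEq σ]
    {K : Matrix ι σ R} {K' : Matrix σ ι R} (h : K' * K = 1)
    (T : MvPolynomial σ R →ₗ[R] MvPolynomial σ R) (f : MvPolynomial σ R) :
    ∑ a, linearForm (fun m => K' m a) * T (pderivAlong (K a) f) = ∑ m, X m * T (pderiv m f) := by
  have hKK : ∀ m n, ∑ a, K' m a * K a n = if m = n then 1 else 0 := fun m n => by
    rw [← Matrix.mul_apply, h, Matrix.one_apply]
  calc ∑ a, linearForm (fun m => K' m a) * T (pderivAlong (K a) f)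
      = ∑ m, ∑ n, (∑ a, K' m a * K a n) • (X m * T (pderiv n f)) := by
        simp only [linearForm, pderivAlong_apply, C_mul', map_sum, map_smul, smul_mul_assoc,
          mul_smul_comm, Finset.sum_mul, Finset.mul_sum, Finset.sum_smul, Finset.smul_sum,
          smul_smul]
        rw [Finset.sum_comm]
        refine (Finset.sum_congr rfl fun n _ => Finset.sum_comm).trans ?_
        rw [Finset.sum_comm]
        simp only [mul_comm]
    _ = ∑ m, X m * T (pderiv m f) := by simp [hKK]

theorem pderivAlong_homotopyOp {R : Type*} [Field R] (v : σ → R) (k : ℕ)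
    (f : MvPolynomial σ R) :
    pderivAlong v (homotopyOp k f) = homotopyOp (k + 1) (pderivAlong v f) := by
  simp [pderivAlong_apply, pderiv_homotopyOp, C_mul']

end Frame

end MvPolynomial

theorem delK_eq_pderivAlong {N : ℕ} (K : Matrix (Fin N) (Fin N) ℝ) (i : Fin N)
    (f : MvPolynomial (Fin N) ℝ) : delK K i f = pderivAlong (K i) f :=
  (pderivAlong_apply (K i) f).symm

theorem generalized_poincare_lemma_general
    (N : ℕ) (K K' : Matrix (Fin N) (Fin N) ℝ)
    (hKK' : K * K' = 1) (hK'K : K' * K = 1)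
    (A : Fin N → Fin N → MvPolynomial (Fin N) ℝ)
    (hA_anti : ∀ i j, A i j = - A j i)
    (hA_cocycle : ∀ i j k,
      delK K i (A j k) + delK K j (A k i) + delK K k (A i j) = 0) :
    ∃ C : Fin N → MvPolynomial (Fin N) ℝ,
      ∀ i j, A i j = delK K i (C j) - delK K j (C i) := by
  simp only [delK_eq_pderivAlong] at hA_cocycle ⊢
  have hdual : ∀ i a, pderivAlong (K i) (linearForm fun m => K' m a) = if i = a then 1 else 0 := by
    intro i a
    rw [pderivAlong_linearForm, ← Matrix.mul_apply', hKK', Matrix.one_apply]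
    split_ifs <;> simp
  have heuler : ∀ f, ∑ a, linearForm (fun m => K' m a) * homotopyOp 3 (pderivAlong (K a) f) +
      2 • homotopyOp 2 f = f := by
    intro f
    rw [sum_linearForm_mul_pderivAlong hK'K]
    exact sum_X_mul_homotopyOp_pderiv two_ne_zero f
  exact ⟨_, Derivation.cocycle_eq_sub_of_homotopy (fun i => pderivAlong (K i))
    (fun a => linearForm fun m => K' m a) hdual (homotopyOp 2) (homotopyOp 3)
    (fun i => pderivAlong_homotopyOp (K i) 2) heuler A hA_anti hA_cocycle⟩

theorem generalized_poincare_lemma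
    (N : ℕ) (hN : 1 ≤ N) (K K' : Matrix (Fin N) (Fin N) ℝ)
    (hKK' : K * K' = 1) (hK'K : K' * K = 1)
    (A : Fin N → Fin N → MvPolynomial (Fin N) ℝ)
    (hA_anti : ∀ i j, A i j = - A j i)
    (hA_cocycle : ∀ i j k,
      delK K i (A j k) + delK K j (A k i) + delK K k (A i j) = 0) :
    ∃ C : Fin N → MvPolynomial (Fin N) ℝ,
      ∀ i j, A i j = delK K i (C j) - delK K j (C i) :=
  generalized_poincare_lemma_general N K K' hKK' hK'K A hA_anti hA_cocycle
end
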